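/- Let K : ℝ → ℝ be C¹ with K'(p) > 0 for all p ∈ ℝ. Let f : (0,∞) → ℝ be bounded on every compact subset of (0,∞). Let c > 0 and let u, w be real functions on [0,c) that are continuously differentiable on [0,c) and positive on (0,c), such that the functions t ↦ K(u'(t)) and t ↦ K(w'(t)) are differentiable on (0,c) with (d/dt) K(u'(t)) = f(u(t)) and (d/dt) K(w'(t)) = f(w(t)) for all t ∈ (0,c). Assume u(0) = w(0) = 0, u'(0) = w'(0), and u'(t) > 0 for all t ∈ (0,c). Then u(t) = w(t) for all t ∈ [0,c). -/

import Mathlib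

/-!
Along a solution of `(K(v'))' = f(v)` the first integral `Φ(v') - F(v)` is constant, where
`Φ(p) = ∫₀ᵖ s K'(s) ds` is strictly increasing on `[0, ∞)` and `F' = f`. As `f` need not be
integrable near `0`, the potential is read off the increasing solution: `F(s) = Φ(u'(u⁻¹ s))`.
At a point `T` where `u` and `w` agree to first order, the first integral of `w` vanishes, so
`Φ(w') = Φ(u' ∘ u⁻¹ ∘ w) > 0` just right of `T`. Then `w' ≠ 0` there, and `w' > 0` at some
point (by continuity of `w'` if `T > 0`, by the mean value theorem and `w(0) = 0` if `T = 0`),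
so `w' = u' ∘ u⁻¹ ∘ w`. Hence `u⁻¹(w t) - t` is constant, and it tends to `0` at `T`.
Real induction over the closed set where the 1-jets of `u` and `w` agree concludes.
-/

open Set Filter Topology Function

theorem StrictMonoOn.continuousOn_invFunOn {α β : Type*} [LinearOrder α] [TopologicalSpace α]
    [OrderTopology α] [Nonempty α] [LinearOrder β] [TopologicalSpace β] [OrderTopology β]
    {u : α → β} {S : Set α} (hu : StrictMonoOn u S) (hS : S.OrdConnected) :
    ContinuousOn (invFunOn u S) (u '' S) := by
  rintro _ ⟨T, hT, rfl⟩
  have hinv : ∀ s ∈ u '' S, invFunOn u S s ∈ S ∧ u (invFunOn u S s) = s :=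
    fun s hs => ⟨invFunOn_mem hs, invFunOn_eq hs⟩
  rw [ContinuousWithinAt, hu.injOn.leftInvOn_invFunOn hT]
  refine tendsto_order.2 ⟨fun l hl => ?_, fun l hl => ?_⟩
  · by_cases hlS : l ∈ S
    · filter_upwards [nhdsWithin_le_nhds (Ioi_mem_nhds (hu hlS hT hl)), self_mem_nhdsWithin]
        with s hs hsS
      obtain ⟨hmem, heq⟩ := hinv s hsS
      exact (hu.lt_iff_lt hlS hmem).1 (by rwa [heq])
    · filter_upwards [self_mem_nhdsWithin] with s hsS
      exact lt_of_not_ge fun hle => hlS (hS.out (hinv s hsS).1 hT ⟨hle, hl.le⟩)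
  · by_cases hlS : l ∈ S
    · filter_upwards [nhdsWithin_le_nhds (Iio_mem_nhds (hu hT hlS hl)), self_mem_nhdsWithin]
        with s hs hsS
      obtain ⟨hmem, heq⟩ := hinv s hsS
      exact (hu.lt_iff_lt hmem hlS).1 (by rwa [heq])
    · filter_upwards [self_mem_nhdsWithin] with s hsS
      exact lt_of_not_ge fun hle => hlS (hS.out hT (hinv s hsS).1 ⟨hl.le, hle⟩)

theorem StrictMonoOn.hasDerivAt_invFunOn {u : ℝ → ℝ} {S : Set ℝ} {s u' : ℝ}
    (hu : StrictMonoOn u S) (hS : S.OrdConnected) (hs : u '' S ∈ 𝓝 s)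
    (hderiv : HasDerivAt u u' (invFunOn u S s)) (hu' : u' ≠ 0) :
    HasDerivAt (invFunOn u S) u'⁻¹ s :=
  hderiv.of_local_left_inverse ((hu.continuousOn_invFunOn hS).continuousAt hs) hu'
    (eventually_of_mem hs fun _ hy => invFunOn_eq hy)

theorem eqOn_of_hasDerivAt_zero_of_tendsto {g : ℝ → ℝ} {T b L : ℝ}
    (hg : ∀ t ∈ Ioo T b, HasDerivAt g 0 t) (hlim : Tendsto g (𝓝[>] T) (𝓝 L)) :
    EqOn g (fun _ => L) (Ioo T b) := by
  intro t ht
  have hconst : ∀ x ∈ Ioo T b, g x = g t := fun x hx =>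
    isOpen_Ioo.is_const_of_deriv_eq_zero isPreconnected_Ioo
      (fun y hy => (hg y hy).differentiableAt.differentiableWithinAt)
      (fun y hy => (hg y hy).deriv) hx ht
  refine tendsto_nhds_unique (tendsto_const_nhds.congr' ?_) hlim
  filter_upwards [Ioo_mem_nhdsGT (ht.1.trans ht.2)] with x hx using (hconst x hx).symm

theorem IsPreconnected.forall_pos_of_ne_zero {X : Type*} [TopologicalSpace X] {s : Set X}
    {g : X → ℝ} (hs : IsPreconnected s) (hg : ContinuousOn g s) (hne : ∀ x ∈ s, g x ≠ 0)
    {a : X} (ha : a ∈ s) (hpos : 0 < g a) : ∀ x ∈ s, 0 < g x := by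
  intro x hx
  by_contra! hle
  obtain ⟨y, hy, hy0⟩ := hs.intermediate_value hx ha hg ⟨hle, hpos.le⟩
  exact hne y hy hy0

theorem nhdsGT_le_nhdsWithin_Ioo {a c T : ℝ} (hT : T ∈ Ico a c) : 𝓝[>] T ≤ 𝓝[Ioo a c] T :=
  nhdsWithin_le_of_mem (mem_of_superset (Ioo_mem_nhdsGT hT.2) (Ioo_subset_Ioo_left hT.1))

theorem ContinuousOn.tendsto_nhdsGT {v : ℝ → ℝ} {a c T : ℝ} (hv : ContinuousOn v (Ico a c))
    (hT : T ∈ Ico a c) : Tendsto v (𝓝[>] T) (𝓝 (v T)) :=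
  (hv T hT).tendsto.mono_left
    ((nhdsGT_le_nhdsWithin_Ioo hT).trans (nhdsWithin_mono _ Ioo_subset_Ico_self))

theorem ContDiffOn.tendsto_deriv_nhdsWithin_Ioo {v : ℝ → ℝ} {a c T : ℝ}
    (hv : ContDiffOn ℝ 1 v (Ico a c)) (hT : T ∈ Ico a c) :
    Tendsto (deriv v) (𝓝[Ioo a c] T) (𝓝 (derivWithin v (Ico a c) T)) :=
  (((hv.continuousOn_derivWithin (uniqueDiffOn_Ico a c) le_rfl) T hT).tendsto.mono_left
    (nhdsWithin_mono _ Ioo_subset_Ico_self)).congr'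
    (eventually_nhdsWithin_of_forall fun _ ht => derivWithin_of_mem_nhds (Ico_mem_nhds ht.1 ht.2))

theorem ContDiffOn.hasStrictDerivAt_of_mem_Ioo {v : ℝ → ℝ} {a c t : ℝ}
    (hv : ContDiffOn ℝ 1 v (Ico a c)) (ht : t ∈ Ioo a c) : HasStrictDerivAt v (deriv v t) t :=
  (hv.contDiffAt (Ico_mem_nhds ht.1 ht.2)).hasStrictDerivAt one_ne_zero

theorem ContDiffOn.hasDerivAt_invFunOn {u : ℝ → ℝ} {a c t : ℝ}
    (hu : ContDiffOn ℝ 1 u (Ico a c)) (hmono : StrictMonoOn u (Ico a c)) (ht : t ∈ Ioo a c)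
    (hne : deriv u t ≠ 0) : HasDerivAt (invFunOn u (Ico a c)) (deriv u t)⁻¹ (u t) := by
  have hstrict := hu.hasStrictDerivAt_of_mem_Ioo ht
  refine hmono.hasDerivAt_invFunOn ordConnected_Ico
    (hstrict.map_nhds_eq hne ▸ image_mem_map (Ico_mem_nhds ht.1 ht.2)) ?_ hne
  rw [hmono.injOn.leftInvOn_invFunOn (Ioo_subset_Ico_self ht)]
  exact hstrict.hasDerivAt

theorem eventually_eq_and_derivWithin_eq {u w : ℝ → ℝ} {a c T b : ℝ} (hT : T ∈ Ico a c)
    (hb : T < b) (h : EqOn u w (Ioo T b)) :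
    ∀ᶠ t in 𝓝[>] T, u t = w t ∧ derivWithin u (Ico a c) t = derivWithin w (Ico a c) t := by
  filter_upwards [Ioo_mem_nhdsGT (lt_min hb hT.2)] with t ht
  have htb : t ∈ Ioo T b := ⟨ht.1, ht.2.trans_le (min_le_left _ _)⟩
  have hS : Ico a c ∈ 𝓝 t :=
    Ico_mem_nhds (hT.1.trans_lt ht.1) (ht.2.trans_le (min_le_right _ _))
  rw [derivWithin_of_mem_nhds hS, derivWithin_of_mem_nhds hS,
    (eventuallyEq_of_mem (Ioo_mem_nhds htb.1 htb.2) h).deriv_eq]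
  exact ⟨h htb, rfl⟩

noncomputable def kineticEnergy (K : ℝ → ℝ) (p : ℝ) : ℝ := ∫ s in (0 : ℝ)..p, s * deriv K s

section KineticEnergy

variable {K : ℝ → ℝ}

theorem hasDerivAt_kineticEnergy (hK : Continuous (deriv K)) (p : ℝ) :
    HasDerivAt (kineticEnergy K) (p * deriv K p) p :=
  ((continuous_id.mul hK).integral_hasStrictDerivAt 0 p).hasDerivAt

theorem continuous_kineticEnergy (hK : Continuous (deriv K)) : Continuous (kineticEnergy K) :=
  continuous_iff_continuousAt.2 fun p => (hasDerivAt_kineticEnergy hK p).continuousAt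

theorem strictMonoOn_kineticEnergy (hK : Continuous (deriv K)) (hK' : ∀ p, 0 < p → 0 < deriv K p) :
    StrictMonoOn (kineticEnergy K) (Ici 0) := by
  refine strictMonoOn_of_deriv_pos (convex_Ici 0) (continuous_kineticEnergy hK).continuousOn
    fun p hp => ?_
  rw [interior_Ici] at hp
  rw [(hasDerivAt_kineticEnergy hK p).deriv]
  exact mul_pos hp (hK' p hp)

end KineticEnergy

namespace LiNirenberg

structure IsSolution (K f : ℝ → ℝ) (c : ℝ) (v : ℝ → ℝ) : Prop where
  contDiffOn : ContDiffOn ℝ 1 v (Ico 0 c)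
  hasDerivAt_comp : ∀ t ∈ Ioo 0 c, HasDerivAt (fun τ => K (deriv v τ)) (f (v t)) t

noncomputable def potential (K u : ℝ → ℝ) (c s : ℝ) : ℝ :=
  kineticEnergy K (deriv u (invFunOn u (Ico 0 c) s))

section Solutions

variable {K f u v w : ℝ → ℝ} {c t : ℝ}

theorem IsSolution.continuousOn_deriv (hv : IsSolution K f c v) :
    ContinuousOn (deriv v) (Ioo 0 c) :=
  (hv.contDiffOn.mono Ioo_subset_Ico_self).continuousOn_deriv_of_isOpen isOpen_Ioo le_rfl

theorem IsSolution.hasDerivAt_deriv (hv : IsSolution K f c v) (ht : t ∈ Ioo 0 c) {k : ℝ}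
    (hK : HasDerivAt K k (deriv v t)) (hk : k ≠ 0) :
    HasDerivAt (deriv v) (f (v t) / k) t :=
  .of_comp_left (hv.continuousOn_deriv.continuousAt (Ioo_mem_nhds ht.1 ht.2)) hK
    (hv.hasDerivAt_comp t ht) hk EventuallyEq.rfl

theorem hasDerivAt_potential (hK : ContDiff ℝ 1 K) (hK' : ∀ p, 0 < deriv K p)
    (hu : IsSolution K f c u) (hmono : StrictMonoOn u (Ico 0 c))
    (hu' : ∀ t ∈ Ioo 0 c, 0 < deriv u t) (ht : t ∈ Ioo 0 c) :
    HasDerivAt (potential K u c) (f (u t)) (u t) := by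
  have hρt : invFunOn u (Ico 0 c) (u t) = t :=
    hmono.injOn.leftInvOn_invFunOn (Ioo_subset_Ico_self ht)
  have hρ := hu.contDiffOn.hasDerivAt_invFunOn hmono ht (hu' t ht).ne'
  have hu'' := hu.hasDerivAt_deriv ht ((hK.differentiable one_ne_zero _).hasDerivAt) (hK' _).ne'
  have hcomp := (hasDerivAt_kineticEnergy (hK.continuous_deriv le_rfl) (deriv u t)).comp_of_eq (u t)
    (hu''.comp_of_eq (u t) hρ hρt.symm) (by simp [hρt])
  refine hcomp.congr_deriv ?_
  field_simp [(hK' (deriv u t)).ne', (hu' t ht).ne']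

theorem hasDerivAt_energy (hK : ContDiff ℝ 1 K) (hK' : ∀ p, 0 < deriv K p)
    (hu : IsSolution K f c u) (hmono : StrictMonoOn u (Ico 0 c))
    (hu' : ∀ t ∈ Ioo 0 c, 0 < deriv u t) (hw : IsSolution K f c w) (ht : t ∈ Ioo 0 c)
    {t' : ℝ} (ht' : t' ∈ Ioo 0 c) (hwt : u t' = w t) :
    HasDerivAt (fun τ => kineticEnergy K (deriv w τ) - potential K u c (w τ)) 0 t := by
  have hΦ := (hasDerivAt_kineticEnergy (hK.continuous_deriv le_rfl) _).comp t
    (hw.hasDerivAt_deriv ht ((hK.differentiable one_ne_zero _).hasDerivAt) (hK' _).ne')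
  have hF := (hasDerivAt_potential hK hK' hu hmono hu' ht').comp_of_eq t
    (hw.contDiffOn.hasStrictDerivAt_of_mem_Ioo ht).hasDerivAt hwt
  refine (hΦ.sub hF).congr_deriv ?_
  rw [hwt]
  field_simp [(hK' (deriv w t)).ne']
  ring

end Solutions

section LocalUniqueness

variable {K f u w : ℝ → ℝ} {c T : ℝ}

theorem eventually_mem_image (hu : ContinuousOn u (Ico 0 c)) (hmono : StrictMonoOn u (Ico 0 c))
    (hu0 : u 0 = 0) (hw : ContinuousOn w (Ico 0 c)) (hwpos : ∀ t ∈ Ioo 0 c, 0 < w t)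
    (hT : T ∈ Ico 0 c) (hwT : u T = w T) :
    ∀ᶠ t in 𝓝[>] T, t ∈ Ioo 0 c ∧ w t ∈ u '' Ioo 0 c := by
  obtain ⟨d, hTd, hdc⟩ := exists_between hT.2
  have hd0 : 0 ≤ d := hT.1.trans hTd.le
  have himage : Ioo 0 (u d) ⊆ u '' Ioo 0 c := by
    have := intermediate_value_Ioo hd0 (hu.mono (Icc_subset_Ico_right hdc))
    rw [hu0] at this
    exact this.trans (image_mono (Ioo_subset_Ioo_right hdc.le))
  have hIoo := nhdsGT_le_nhdsWithin_Ioo hT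
  filter_upwards [hIoo self_mem_nhdsWithin,
    (hwT ▸ hw.tendsto_nhdsGT hT).eventually_lt_const (hmono hT ⟨hd0, hdc⟩ hTd)] with t ht hwt
  exact ⟨ht, himage ⟨hwpos t ht, hwt⟩⟩

theorem tendsto_invFunOn_comp (hu : ContinuousOn u (Ico 0 c))
    (hmono : StrictMonoOn u (Ico 0 c)) (hu0 : u 0 = 0) (hw : ContinuousOn w (Ico 0 c))
    (hwpos : ∀ t ∈ Ioo 0 c, 0 < w t) (hT : T ∈ Ico 0 c) (hwT : u T = w T) :
    Tendsto (fun t => invFunOn u (Ico 0 c) (w t)) (𝓝[>] T) (𝓝[Ioo 0 c] T) := by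
  have hev := eventually_mem_image hu hmono hu0 hw hwpos hT hwT
  have hρ := hmono.continuousOn_invFunOn ordConnected_Ico (u T) (mem_image_of_mem u hT)
  rw [ContinuousWithinAt, hmono.injOn.leftInvOn_invFunOn hT] at hρ
  have hwlim : Tendsto w (𝓝[>] T) (𝓝[u '' Ico 0 c] (u T)) := tendsto_nhdsWithin_iff.2
    ⟨hwT ▸ hw.tendsto_nhdsGT hT, hev.mono fun t ht => image_mono Ioo_subset_Ico_self ht.2⟩
  refine tendsto_nhdsWithin_iff.2 ⟨hρ.comp hwlim, hev.mono ?_⟩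
  rintro t ⟨-, t', ht', hwt⟩
  rwa [← hwt, hmono.injOn.leftInvOn_invFunOn (Ioo_subset_Ico_self ht')]

theorem exists_kineticEnergy_eq (hK : ContDiff ℝ 1 K) (hK' : ∀ p, 0 < deriv K p)
    (hu : IsSolution K f c u) (hmono : StrictMonoOn u (Ico 0 c))
    (hu' : ∀ t ∈ Ioo 0 c, 0 < deriv u t) (hu0 : u 0 = 0) (hw : IsSolution K f c w)
    (hwpos : ∀ t ∈ Ioo 0 c, 0 < w t) (hT : T ∈ Ico 0 c) (hwT : u T = w T)
    (h'T : derivWithin u (Ico 0 c) T = derivWithin w (Ico 0 c) T) :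
    ∃ b > T, ∀ t ∈ Ioo T b, t ∈ Ioo 0 c ∧
      ∃ t' ∈ Ioo 0 c, u t' = w t ∧ kineticEnergy K (deriv w t) = kineticEnergy K (deriv u t') := by
  have hucont := hu.contDiffOn.continuousOn
  have hwcont := hw.contDiffOn.continuousOn
  have hΦ := continuous_kineticEnergy (hK.continuous_deriv le_rfl)
  have hlim : Tendsto (fun t => kineticEnergy K (deriv w t) - potential K u c (w t))
      (𝓝[>] T) (𝓝 0) := by
    have hwlim := (hΦ.tendsto _).comp ((hw.contDiffOn.tendsto_deriv_nhdsWithin_Ioo hT).mono_left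
      (nhdsGT_le_nhdsWithin_Ioo hT))
    have hulim := (hΦ.tendsto _).comp ((hu.contDiffOn.tendsto_deriv_nhdsWithin_Ioo hT).comp
      (tendsto_invFunOn_comp hucont hmono hu0 hwcont hwpos hT hwT))
    simpa [h'T, potential] using hwlim.sub hulim
  obtain ⟨b, hb, hbsub⟩ := mem_nhdsGT_iff_exists_Ioo_subset.1
    (eventually_mem_image hucont hmono hu0 hwcont hwpos hT hwT)
  refine ⟨b, hb, fun t ht => ?_⟩
  obtain ⟨htc, t', ht', hwt⟩ := hbsub ht
  have hE := eqOn_of_hasDerivAt_zero_of_tendsto (fun s hs => by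
      obtain ⟨hsc, s', hs', hws⟩ := hbsub hs
      exact hasDerivAt_energy hK hK' hu hmono hu' hw hsc hs' hws) hlim ht
  rw [← hwt, potential, hmono.injOn.leftInvOn_invFunOn (Ioo_subset_Ico_self ht')] at hE
  exact ⟨htc, t', ht', hwt, sub_eq_zero.1 hE⟩

theorem frequently_deriv_pos (hw : ContDiffOn ℝ 1 w (Ico 0 c)) (hw0 : w 0 = 0)
    (hwpos : ∀ t ∈ Ioo 0 c, 0 < w t) (hT : T ∈ Ico 0 c)
    (hT' : 0 < T → 0 < derivWithin w (Ico 0 c) T) : ∃ᶠ t in 𝓝[>] T, 0 < deriv w t := by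
  rcases hT.1.eq_or_lt with rfl | hTpos
  · refine frequently_iff.2 fun hU => ?_
    obtain ⟨ε, hε, hεU⟩ := mem_nhdsGT_iff_exists_Ioo_subset.1 hU
    obtain ⟨t, ht0, htε⟩ := exists_between (lt_min hε hT.2)
    obtain ⟨x, hx, hslope⟩ := exists_hasDerivAt_eq_slope w (deriv w) ht0
      (hw.continuousOn.mono (Icc_subset_Ico_right (htε.trans_le (min_le_right _ _))))
      fun x hx => (hw.hasStrictDerivAt_of_mem_Ioo
        ⟨hx.1, hx.2.trans (htε.trans_le (min_le_right _ _))⟩).hasDerivAt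
    refine ⟨x, hεU ⟨hx.1, hx.2.trans (htε.trans_le (min_le_left _ _))⟩, ?_⟩
    rw [hslope, hw0, sub_zero, sub_zero]
    exact div_pos (hwpos t ⟨ht0, htε.trans_le (min_le_right _ _)⟩) ht0
  · exact (((hw.tendsto_deriv_nhdsWithin_Ioo hT).mono_left (nhdsGT_le_nhdsWithin_Ioo hT)).eventually
      (lt_mem_nhds (hT' hTpos))).frequently

theorem exists_deriv_eq (hK : ContDiff ℝ 1 K) (hK' : ∀ p, 0 < deriv K p)
    (hu : IsSolution K f c u) (hmono : StrictMonoOn u (Ico 0 c))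
    (hu' : ∀ t ∈ Ioo 0 c, 0 < deriv u t) (hu0 : u 0 = 0) (hw : IsSolution K f c w)
    (hw0 : w 0 = 0) (hwpos : ∀ t ∈ Ioo 0 c, 0 < w t) (hT : T ∈ Ico 0 c) (hwT : u T = w T)
    (h'T : derivWithin u (Ico 0 c) T = derivWithin w (Ico 0 c) T) :
    ∃ b > T, ∀ t ∈ Ioo T b, t ∈ Ioo 0 c ∧ ∃ t' ∈ Ioo 0 c, u t' = w t ∧ deriv w t = deriv u t' := by
  obtain ⟨b, hb, hE⟩ := exists_kineticEnergy_eq hK hK' hu hmono hu' hu0 hw hwpos hT hwT h'T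
  have hΦ := strictMonoOn_kineticEnergy (hK.continuous_deriv le_rfl) fun p _ => hK' p
  have hne : ∀ t ∈ Ioo T b, deriv w t ≠ 0 := by
    intro t ht h0
    obtain ⟨-, t', ht', -, hEt⟩ := hE t ht
    rw [h0] at hEt
    exact (hu' t' ht').ne (hΦ.injOn self_mem_Ici (hu' t' ht').le hEt)
  have hT' : 0 < T → 0 < derivWithin w (Ico 0 c) T := fun hTpos => by
    rw [← h'T, derivWithin_of_mem_nhds (Ico_mem_nhds hTpos hT.2)]
    exact hu' T ⟨hTpos, hT.2⟩
  obtain ⟨t₀, ht₀, ht₀b⟩ := ((frequently_deriv_pos hw.contDiffOn hw0 hwpos hT hT').and_eventually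
    (Ioo_mem_nhdsGT hb)).exists
  have hpos := isPreconnected_Ioo.forall_pos_of_ne_zero
    (hw.continuousOn_deriv.mono fun t ht => (hE t ht).1) hne ht₀b ht₀
  refine ⟨b, hb, fun t ht => ?_⟩
  obtain ⟨htc, t', ht', hwt, hEt⟩ := hE t ht
  exact ⟨htc, t', ht', hwt, hΦ.injOn (hpos t ht).le (hu' t' ht').le hEt⟩

theorem exists_eqOn_Ioo (hK : ContDiff ℝ 1 K) (hK' : ∀ p, 0 < deriv K p)
    (hu : IsSolution K f c u) (hu' : ∀ t ∈ Ioo 0 c, 0 < deriv u t) (hu0 : u 0 = 0)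
    (hw : IsSolution K f c w) (hw0 : w 0 = 0) (hwpos : ∀ t ∈ Ioo 0 c, 0 < w t)
    (hT : T ∈ Ico 0 c) (hwT : u T = w T)
    (h'T : derivWithin u (Ico 0 c) T = derivWithin w (Ico 0 c) T) :
    ∃ b > T, EqOn u w (Ioo T b) := by
  have hmono : StrictMonoOn u (Ico 0 c) :=
    strictMonoOn_of_deriv_pos (convex_Ico 0 c) hu.contDiffOn.continuousOn
      fun t ht => hu' t (by rwa [interior_Ico] at ht)
  obtain ⟨b, hb, hI⟩ := exists_deriv_eq hK hK' hu hmono hu' hu0 hw hw0 hwpos hT hwT h'T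
  set ρ := invFunOn u (Ico 0 c)
  have hρu : ∀ t ∈ Ioo 0 c, ρ (u t) = t := fun t ht =>
    hmono.injOn.leftInvOn_invFunOn (Ioo_subset_Ico_self ht)
  have hψ : ∀ t ∈ Ioo T b, HasDerivAt (fun τ => ρ (w τ) - τ) 0 t := by
    intro t ht
    obtain ⟨htc, t', ht', hwt, hw't⟩ := hI t ht
    have hρ := hu.contDiffOn.hasDerivAt_invFunOn hmono ht' (hu' t' ht').ne'
    rw [hwt] at hρ
    refine ((hρ.comp t (hw.contDiffOn.hasStrictDerivAt_of_mem_Ioo htc).hasDerivAt).sub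
      (hasDerivAt_id t)).congr_deriv ?_
    rw [hw't, inv_mul_cancel₀ (hu' t' ht').ne', sub_self]
  have hlim : Tendsto (fun τ => ρ (w τ) - τ) (𝓝[>] T) (𝓝 0) := by
    simpa using ((tendsto_invFunOn_comp hu.contDiffOn.continuousOn hmono hu0
      hw.contDiffOn.continuousOn hwpos hT hwT).mono_right nhdsWithin_le_nhds).sub
      (tendsto_id.mono_left nhdsWithin_le_nhds)
  refine ⟨b, hb, fun t ht => ?_⟩
  obtain ⟨-, t', ht', hwt, -⟩ := hI t ht
  have hρt : ρ (w t) = t := sub_eq_zero.1 (eqOn_of_hasDerivAt_zero_of_tendsto hψ hlim ht)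
  rw [← hwt, hρu t' ht'] at hρt
  rw [← hwt, hρt]

end LocalUniqueness

end LiNirenberg

theorem stmt_13_general (K : ℝ → ℝ) (hK : ContDiff ℝ 1 K) (hK' : ∀ p : ℝ, 0 < deriv K p)
    (f : ℝ → ℝ)
    (c : ℝ) (u w : ℝ → ℝ)
    (hu1 : ContDiffOn ℝ 1 u (Set.Ico 0 c)) (hw1 : ContDiffOn ℝ 1 w (Set.Ico 0 c))
    (hwpos : ∀ t ∈ Set.Ioo 0 c, 0 < w t)
    (hueq : ∀ t ∈ Set.Ioo 0 c, HasDerivAt (fun τ => K (deriv u τ)) (f (u t)) t)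
    (hweq : ∀ t ∈ Set.Ioo 0 c, HasDerivAt (fun τ => K (deriv w τ)) (f (w t)) t)
    (hu0 : u 0 = 0) (hw0 : w 0 = 0)
    (h'0 : derivWithin u (Set.Ico 0 c) 0 = derivWithin w (Set.Ico 0 c) 0)
    (hu' : ∀ t ∈ Set.Ioo 0 c, 0 < deriv u t) :
    ∀ t ∈ Set.Ico 0 c, u t = w t := by
  intro t ht
  let jet : (ℝ → ℝ) → ℝ → ℝ × ℝ := fun v x => (v x, derivWithin v (Ico 0 c) x)
  have hjet : ∀ v, ContDiffOn ℝ 1 v (Ico 0 c) → ContinuousOn (jet v) (Icc 0 t) := fun v hv =>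
    (hv.continuousOn.prodMk (hv.continuousOn_derivWithin (uniqueDiffOn_Ico 0 c) le_rfl)).mono
      (Icc_subset_Ico_right ht.2)
  have hclosed : IsClosed ({x | jet u x = jet w x} ∩ Icc 0 t) := by
    rw [inter_comm]
    exact isClosed_Icc.isClosed_eq (hjet u hu1) (hjet w hw1)
  have hsub : Icc 0 t ⊆ {x | jet u x = jet w x} :=
    hclosed.Icc_subset_of_forall_mem_nhdsWithin (by simp [jet, hu0, hw0, h'0])
      fun x ⟨hx, hxt⟩ => by
        have hxc : x ∈ Ico 0 c := ⟨hxt.1, hxt.2.trans ht.2⟩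
        obtain ⟨b, hb, hEq⟩ := LiNirenberg.exists_eqOn_Ioo hK hK' ⟨hu1, hueq⟩ hu' hu0
          ⟨hw1, hweq⟩ hw0 hwpos hxc (congrArg Prod.fst hx) (congrArg Prod.snd hx)
        filter_upwards [eventually_eq_and_derivWithin_eq hxc hb hEq] with y hy
        exact Prod.ext hy.1 hy.2
  exact congrArg Prod.fst (hsub ⟨ht.1, le_rfl⟩)

/-- Lemma 5.4 of Li–Nirenberg, extending Lemma 2.2. -/
theorem stmt_13 (K : ℝ → ℝ) (hK : ContDiff ℝ 1 K) (hK' : ∀ p : ℝ, 0 < deriv K p)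
    (f : ℝ → ℝ)
    (hf : ∀ s : Set ℝ, s ⊆ Set.Ioi 0 → IsCompact s → ∃ M : ℝ, ∀ x ∈ s, |f x| ≤ M)
    (c : ℝ) (hc : 0 < c) (u w : ℝ → ℝ)
    (hu1 : ContDiffOn ℝ 1 u (Set.Ico 0 c)) (hw1 : ContDiffOn ℝ 1 w (Set.Ico 0 c))
    (hupos : ∀ t ∈ Set.Ioo 0 c, 0 < u t) (hwpos : ∀ t ∈ Set.Ioo 0 c, 0 < w t)
    (hueq : ∀ t ∈ Set.Ioo 0 c, HasDerivAt (fun τ => K (deriv u τ)) (f (u t)) t)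
    (hweq : ∀ t ∈ Set.Ioo 0 c, HasDerivAt (fun τ => K (deriv w τ)) (f (w t)) t)
    (hu0 : u 0 = 0) (hw0 : w 0 = 0)
    (h'0 : derivWithin u (Set.Ico 0 c) 0 = derivWithin w (Set.Ico 0 c) 0)
    (hu' : ∀ t ∈ Set.Ioo 0 c, 0 < deriv u t) :
    ∀ t ∈ Set.Ico 0 c, u t = w t :=
  stmt_13_general K hK hK' f c u w hu1 hw1 hwpos hueq hweq hu0 hw0 h'0 hu'
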